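/- Pseudo-increasing refactoring theorem in the presence of modify operations: for every base program B : α → Option β and every list L of generalized conditional delta operations, there exist a base program B' and a list L' of generalized conditional delta operations such that: (i) L' contains no remove, i.e. no operation whose update component is Sum.inl none; (ii) for every product p, variant B' L' p = variant B L p; (iii) every modify of L', i.e. every operation (c', k, Sum.inr f), satisfies ∃ c, (c, k, Sum.inr f) ∈ L (the refactoring does not introduce new modify operations); and (iv) for every reference k, B' k = B k or B' k = none. -/

import Mathlib

/-!
Induct on `L` from the end. Appending an add or a modify to both `L` and the refactored list
preserves all four properties. A trailing remove `(c, k, none)` is eliminated as follows: set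
`B' k := none`, restore the old base value at `k` by a leading add guarded by `¬ c`, and strengthen
the condition of every operation on `k` by `¬ c`. For products satisfying `c` the reference `k`
then stays absent throughout, and for the other products nothing changes.
-/

open Classical in
/-- The variant generated for product `p` from base program `B` and a list `L` of
generalized conditional delta operations (adds/removes via `Sum.inl`, modifies via
`Sum.inr`). -/
noncomputable def variant {α β ρ : Type*} (B : α → Option β)
    (L : List ((ρ → Prop) × α × (Option β ⊕ (β → β)))) (p : ρ) : α → Option β :=
  L.foldl (fun P op =>
    if op.1 p then
      match op.2.2 with
      | Sum.inl o => Function.update P op.2.1 o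
      | Sum.inr f => Function.update P op.2.1 (Option.map f (P op.2.1))
    else P) B

abbrev DeltaOp (ρ α β : Type*) := (ρ → Prop) × α × (Option β ⊕ (β → β))

namespace DeltaOp

open Classical

variable {α β ρ : Type*}

noncomputable def apply (p : ρ) (P : α → Option β) (op : DeltaOp ρ α β) :
    α → Option β :=
  if op.1 p then
    match op.2.2 with
    | Sum.inl o => Function.update P op.2.1 o
    | Sum.inr f => Function.update P op.2.1 (Option.map f (P op.2.1))
  else P

theorem apply_of_not {p : ρ} (P : α → Option β) {op : DeltaOp ρ α β} (h : ¬ op.1 p) :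
    apply p P op = P := if_neg h

theorem apply_inl {p : ρ} (P : α → Option β) {c : ρ → Prop} (k : α) (o : Option β)
    (h : c p) : apply p P (c, k, Sum.inl o) = Function.update P k o := if_pos h

theorem apply_apply_of_ne (p : ρ) (P : α → Option β) (op : DeltaOp ρ α β) {j : α}
    (hj : j ≠ op.2.1) : apply p P op j = P j := by
  obtain ⟨c, k, u | f⟩ := op <;> by_cases hc : c p <;> simp_all [apply]

theorem apply_update_of_ne (p : ρ) (Q : α → Option β) (op : DeltaOp ρ α β) {k : α}
    (hk : op.2.1 ≠ k) (o : Option β) :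
    apply p (Function.update Q k o) op = Function.update (apply p Q op) k o := by
  obtain ⟨c, k', u | f⟩ := op <;> by_cases hc : c p <;>
    simp_all [apply, Function.update_comm hk]

noncomputable def guardAt (c : ρ → Prop) (k : α) (op : DeltaOp ρ α β) : DeltaOp ρ α β :=
  if op.2.1 = k then (fun q => op.1 q ∧ ¬ c q, op.2) else op

def restoreOps (c : ρ → Prop) (k : α) (o : Option β) : List (DeltaOp ρ α β) :=
  o.toList.map fun d => (fun q => ¬ c q, k, Sum.inl (some d))

end DeltaOp

section

open Classical DeltaOp

variable {α β ρ : Type*}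

theorem variant_cons (B : α → Option β) (op : DeltaOp ρ α β) (L : List (DeltaOp ρ α β))
    (p : ρ) : variant B (op :: L) p = variant (apply p B op) L p := rfl

theorem variant_append (B : α → Option β) (L₁ L₂ : List (DeltaOp ρ α β)) (p : ρ) :
    variant B (L₁ ++ L₂) p = variant (variant B L₁ p) L₂ p :=
  List.foldl_append

theorem variant_append_singleton (B : α → Option β) (L : List (DeltaOp ρ α β))
    (op : DeltaOp ρ α β) (p : ρ) : variant B (L ++ [op]) p = apply p (variant B L p) op :=
  variant_append B L [op] p

theorem variant_map_guardAt_of_pos {c : ρ → Prop} {p : ρ} (hc : c p) (k : α)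
    (L : List (DeltaOp ρ α β)) (Q : α → Option β) :
    variant (Function.update Q k none) (L.map (guardAt c k)) p
      = Function.update (variant Q L p) k none := by
  induction L generalizing Q with
  | nil => rfl
  | cons op L ih =>
    rw [List.map_cons, variant_cons, variant_cons, ← ih]
    congr 1
    by_cases hk : op.2.1 = k
    · have hdisabled : ¬ (guardAt c k op).1 p := by simp [guardAt, hk, hc]
      rw [apply_of_not _ hdisabled]
      ext j
      by_cases hj : j = k
      · simp [hj]
      · simp [Function.update_of_ne hj, apply_apply_of_ne p Q op (hk ▸ hj)]
    · rw [guardAt, if_neg hk, apply_update_of_ne p Q op hk]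

theorem variant_map_guardAt_of_neg {c : ρ → Prop} {p : ρ} (hc : ¬ c p) (k : α)
    (L : List (DeltaOp ρ α β)) (Q : α → Option β) :
    variant Q (L.map (guardAt c k)) p = variant Q L p := by
  have hop (Q : α → Option β) (op : DeltaOp ρ α β) :
      apply p Q (guardAt c k op) = apply p Q op := by
    by_cases hk : op.2.1 = k
    · simp [guardAt, hk, apply, hc]
    · rw [guardAt, if_neg hk]
  induction L generalizing Q with
  | nil => rfl
  | cons op L ih => rw [List.map_cons, variant_cons, variant_cons, ih, hop]

theorem variant_restoreOps_of_pos {c : ρ → Prop} {p : ρ} (hc : c p) (k : α)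
    (B : α → Option β) :
    variant (Function.update B k none) (restoreOps c k (B k)) p = Function.update B k none := by
  cases hB : B k with
  | none => rfl
  | some d => exact apply_of_not _ (by simpa using hc)

theorem variant_restoreOps_of_neg {c : ρ → Prop} {p : ρ} (hc : ¬ c p) (k : α)
    (B : α → Option β) : variant (Function.update B k none) (restoreOps c k (B k)) p = B := by
  cases hB : B k with
  | none => exact Function.update_eq_self_iff.mpr hB.symm
  | some d =>
    change apply p _ (fun q => ¬ c q, k, Sum.inl (some d)) = B
    rw [apply_inl (c := fun q => ¬ c q) _ _ _ hc, Function.update_idem, ← hB,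
      Function.update_eq_self]

structure IsPseudoIncreasingRefactoring (B : α → Option β) (L : List (DeltaOp ρ α β))
    (B' : α → Option β) (L' : List (DeltaOp ρ α β)) : Prop where
  no_remove : ∀ op ∈ L', op.2.2 ≠ Sum.inl none
  variant_eq : ∀ p, variant B' L' p = variant B L p
  modify_mem : ∀ c' k f, (c', k, Sum.inr f) ∈ L' → ∃ c, (c, k, Sum.inr f) ∈ L
  base_eq : ∀ k, B' k = B k ∨ B' k = none

namespace IsPseudoIncreasingRefactoring

variable {B B' : α → Option β} {L L' : List (DeltaOp ρ α β)}

theorem refl (B : α → Option β) :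
    IsPseudoIncreasingRefactoring B ([] : List (DeltaOp ρ α β)) B [] where
  no_remove := by simp
  variant_eq _ := rfl
  modify_mem := by simp
  base_eq _ := Or.inl rfl

theorem append_of_ne_remove (h : IsPseudoIncreasingRefactoring B L B' L') {op : DeltaOp ρ α β}
    (hop : op.2.2 ≠ Sum.inl none) :
    IsPseudoIncreasingRefactoring B (L ++ [op]) B' (L' ++ [op]) where
  no_remove := by
    simp only [List.mem_append, List.mem_singleton]
    rintro _ (hmem | rfl)
    exacts [h.no_remove _ hmem, hop]
  variant_eq p := by rw [variant_append_singleton, variant_append_singleton, h.variant_eq]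
  modify_mem c' k f := by
    simp only [List.mem_append, List.mem_singleton]
    rintro (hmem | rfl)
    · obtain ⟨c, hc⟩ := h.modify_mem c' k f hmem
      exact ⟨c, .inl hc⟩
    · exact ⟨c', .inr rfl⟩
  base_eq := h.base_eq

theorem append_remove (h : IsPseudoIncreasingRefactoring B L B' L') (c : ρ → Prop) (k : α) :
    IsPseudoIncreasingRefactoring B (L ++ [(c, k, Sum.inl none)]) (Function.update B' k none)
      (restoreOps c k (B' k) ++ L'.map (guardAt c k)) where
  no_remove := by
    simp only [List.mem_append, List.mem_map, restoreOps]
    rintro _ (⟨d, -, rfl⟩ | ⟨op, hmem, rfl⟩)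
    · simp
    · unfold guardAt
      split_ifs
      exacts [h.no_remove op hmem, h.no_remove op hmem]
  variant_eq p := by
    rw [variant_append, variant_append_singleton, ← h.variant_eq]
    by_cases hc : c p
    · rw [variant_restoreOps_of_pos hc, variant_map_guardAt_of_pos hc, apply_inl _ _ _ hc]
    · rw [variant_restoreOps_of_neg hc, variant_map_guardAt_of_neg hc, apply_of_not _ hc]
  modify_mem c' k' f := by
    simp only [List.mem_append, List.mem_map, restoreOps]
    rintro (⟨d, -, hd⟩ | ⟨⟨c₀, k₀, u₀⟩, hmem, hop⟩)
    · simp at hd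
    · have hop : k₀ = k' ∧ u₀ = Sum.inr f := by
        unfold guardAt at hop
        split_ifs at hop <;> simp_all
      obtain ⟨rfl, rfl⟩ := hop
      obtain ⟨c, hc⟩ := h.modify_mem c₀ k₀ f hmem
      exact ⟨c, .inl hc⟩
  base_eq j := by
    by_cases hj : j = k
    · simp [hj]
    · simpa [Function.update_of_ne hj] using h.base_eq j

end IsPseudoIncreasingRefactoring

end

/-- Pseudo-increasing refactoring theorem in the presence of modify operations. -/
theorem pseudo_increasing_refactoring {α β ρ : Type*} (B : α → Option β)
    (L : List ((ρ → Prop) × α × (Option β ⊕ (β → β)))) :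
    ∃ (B' : α → Option β) (L' : List ((ρ → Prop) × α × (Option β ⊕ (β → β)))),
      (∀ op ∈ L', op.2.2 ≠ Sum.inl (none : Option β)) ∧
      (∀ p : ρ, variant B' L' p = variant B L p) ∧
      (∀ (c' : ρ → Prop) (k : α) (f : β → β), (c', k, Sum.inr f) ∈ L' →
        ∃ c : ρ → Prop, (c, k, Sum.inr f) ∈ L) ∧
      (∀ k : α, B' k = B k ∨ B' k = none) := by
  suffices ∃ B' L', IsPseudoIncreasingRefactoring B L B' L' by
    obtain ⟨B', L', h⟩ := this
    exact ⟨B', L', h.no_remove, h.variant_eq, h.modify_mem, h.base_eq⟩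
  induction L using List.reverseRecOn with
  | nil => exact ⟨B, [], .refl B⟩
  | append_singleton L op ih =>
    obtain ⟨B', L', h⟩ := ih
    obtain ⟨c, k, u⟩ := op
    by_cases hu : u = Sum.inl none
    · subst hu
      exact ⟨_, _, h.append_remove c k⟩
    · exact ⟨B', _, h.append_of_ne_remove hu⟩
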